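/- Let n ≥ 3 and m ≥ 1 be integers, ε : Fin n → ℝ with ε(i) ∈ {1, −1} for each i, and α : Fin n → ℝ with Σᵢ ε(i)·α(i)² = δ where δ = 1 or δ = −1. Let Φ, F : ℝ → ℝ be smooth functions with F > 0 and Φ nowhere zero, define φ, f : ℝⁿ → ℝ by φ(x) = Φ(Σᵢ α(i)·xᵢ) and f(x) = F(Σᵢ α(i)·xᵢ), and let λ, λ_F be real constants (with λ_F = 0 if m = 1). Then the warped-product Einstein PDE system (P1)–(P3) holds at every point x ∈ ℝⁿ if and only if at every ξ ∈ ℝ: (O1) (n−2)·F·Φ'' − m·Φ·F'' − 2m·Φ'·F' = 0, (O2) δ·(F·Φ·Φ'' − (n−1)·F·(Φ')² + m·Φ·Φ'·F') = λ·F, and (O3) δ·(−F·Φ²·F'' + (n−2)·F·Φ·Φ'·F' − (m−1)·Φ²·(F')²) = λ·F² − λ_F. -/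

import Mathlib

/-- Partial derivative of `u : ℝⁿ → ℝ` in the `i`-th coordinate direction. -/
noncomputable def pd {n : ℕ} (i : Fin n) (u : (Fin n → ℝ) → ℝ) (x : Fin n → ℝ) : ℝ :=
  fderiv ℝ u x (Pi.single i 1)

/-- The warped-product Einstein PDE system (P1)–(P3) (equations (1.2)–(1.4) of the paper)
for the metric `(1/φ²)g + f²g_F` on pseudo-Euclidean space `(ℝⁿ, g)`, `g_{ij} = δ_{ij}ε_i`,
with Einstein constants `lam` (ambient) and `lamF` (fiber) and fiber dimension `m`. -/
def EinsteinPDE (n m : ℕ) (ε : Fin n → ℝ) (φ f : (Fin n → ℝ) → ℝ) (lam lamF : ℝ) : Prop :=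
  (∀ x : Fin n → ℝ, ∀ i j : Fin n, i ≠ j →
    ((n : ℝ) - 2) * f x * pd i (pd j φ) x - (m : ℝ) * φ x * pd i (pd j f) x
      - (m : ℝ) * pd i φ x * pd j f x - (m : ℝ) * pd j φ x * pd i f x = 0) ∧
  (∀ x : Fin n → ℝ, ∀ i : Fin n,
    φ x * (((n : ℝ) - 2) * f x * pd i (pd i φ) x - (m : ℝ) * φ x * pd i (pd i f) x
        - 2 * (m : ℝ) * pd i φ x * pd i f x)
      + ε i * (f x * φ x * (∑ k : Fin n, ε k * pd k (pd k φ) x)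
        - ((n : ℝ) - 1) * f x * (∑ k : Fin n, ε k * (pd k φ x) ^ 2)
        + (m : ℝ) * φ x * (∑ k : Fin n, ε k * pd k φ x * pd k f x))
      = ε i * lam * f x) ∧
  (∀ x : Fin n → ℝ,
    -(f x * (φ x) ^ 2 * (∑ k : Fin n, ε k * pd k (pd k f) x))
      + ((n : ℝ) - 2) * f x * φ x * (∑ k : Fin n, ε k * pd k f x * pd k φ x)
      - ((m : ℝ) - 1) * (φ x) ^ 2 * (∑ k : Fin n, ε k * (pd k f x) ^ 2)
      = lam * (f x) ^ 2 - lamF)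

lemma pd_comp {n : ℕ} (α : Fin n → ℝ) {G : ℝ → ℝ} (hG : Differentiable ℝ G)
    (i : Fin n) (x : Fin n → ℝ) :
    pd i (fun y => G (∑ j, α j * y j)) x = α i * deriv G (∑ j, α j * x j) := by
  classical
  set L : (Fin n → ℝ) →L[ℝ] ℝ :=
    ∑ j, α j • (ContinuousLinearMap.proj j : (Fin n → ℝ) →L[ℝ] ℝ) with hLdef
  have hLapp : ∀ y, L y = ∑ j, α j * y j := by
    intro y
    simp [hLdef, ContinuousLinearMap.sum_apply]
  have hL : HasFDerivAt (fun y => ∑ j, α j * y j) L x := by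
    have h := L.hasFDerivAt (x := x)
    rwa [show ⇑L = fun y => ∑ j, α j * y j from funext hLapp] at h
  have hfd : HasFDerivAt (fun y => G (∑ j, α j * y j))
      ((deriv G (∑ j, α j * x j)) • L) x :=
    ((hG (∑ j, α j * x j)).hasDerivAt).comp_hasFDerivAt x hL
  rw [pd, hfd.fderiv]
  have hsingle : L (Pi.single i 1) = α i := by
    rw [hLapp]
    simp [Pi.single_apply, mul_ite, Finset.sum_ite_eq']
  simp [hsingle, mul_comm]

lemma pd2_comp {n : ℕ} (α : Fin n → ℝ) {G : ℝ → ℝ} (hG : ContDiff ℝ (⊤ : ℕ∞) G)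
    (i j : Fin n) (x : Fin n → ℝ) :
    pd i (pd j (fun y => G (∑ k, α k * y k))) x
      = α i * α j * deriv (deriv G) (∑ k, α k * x k) := by
  have hG1 : Differentiable ℝ G := hG.differentiable (by simp)
  have hGi : ContDiff ℝ ((⊤ : ℕ∞) : WithTop ℕ∞) G := hG.of_le (by simp)
  have hG2 : Differentiable ℝ (deriv G) :=
    (contDiff_infty_iff_deriv.mp hGi).2.differentiable (by simp)
  have h1 : pd j (fun y => G (∑ k, α k * y k))
      = fun y => (fun t => α j * deriv G t) (∑ k, α k * y k) :=
    funext fun y => pd_comp α hG1 j y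
  rw [h1, pd_comp α (hG2.const_mul (α j)) i x,
    deriv_const_mul (α j) (hG2 _)]
  ring

/-- Theorem 1.2 (i) of the paper: reduction of the Einstein PDE system to an ODE system
for translation-invariant functions, in the non-null case `Σᵢ εᵢαᵢ² = ±1`. -/
theorem theorem_1_2_nonnull (n m : ℕ) (hn : 3 ≤ n) (hm : 1 ≤ m)
    (ε : Fin n → ℝ) (hε : ∀ i, ε i = 1 ∨ ε i = -1)
    (α : Fin n → ℝ) (δ : ℝ) (hδ : δ = 1 ∨ δ = -1)
    (hα : ∑ i : Fin n, ε i * (α i) ^ 2 = δ)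
    (Φ F : ℝ → ℝ) (hΦ : ContDiff ℝ (⊤ : ℕ∞) Φ) (hF : ContDiff ℝ (⊤ : ℕ∞) F)
    (hFpos : ∀ ξ : ℝ, 0 < F ξ) (hΦne : ∀ ξ : ℝ, Φ ξ ≠ 0)
    (lam lamF : ℝ) (hm1 : m = 1 → lamF = 0) :
    EinsteinPDE n m ε (fun x => Φ (∑ i : Fin n, α i * x i))
      (fun x => F (∑ i : Fin n, α i * x i)) lam lamF ↔
    ∀ ξ : ℝ,
      (((n : ℝ) - 2) * F ξ * deriv (deriv Φ) ξ - (m : ℝ) * Φ ξ * deriv (deriv F) ξ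
        - 2 * (m : ℝ) * deriv Φ ξ * deriv F ξ = 0) ∧
      (δ * (F ξ * Φ ξ * deriv (deriv Φ) ξ - ((n : ℝ) - 1) * F ξ * (deriv Φ ξ) ^ 2
        + (m : ℝ) * Φ ξ * deriv Φ ξ * deriv F ξ) = lam * F ξ) ∧
      (δ * (-(F ξ * (Φ ξ) ^ 2 * deriv (deriv F) ξ)
        + ((n : ℝ) - 2) * F ξ * Φ ξ * deriv Φ ξ * deriv F ξ
        - ((m : ℝ) - 1) * (Φ ξ) ^ 2 * (deriv F ξ) ^ 2) = lam * (F ξ) ^ 2 - lamF) := by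
  classical
  have hΦ1 : Differentiable ℝ Φ := hΦ.differentiable (by simp)
  have hF1 : Differentiable ℝ F := hF.differentiable (by simp)
  have hpdΦ : ∀ (i : Fin n) (x : Fin n → ℝ),
      pd i (fun y => Φ (∑ k, α k * y k)) x = α i * deriv Φ (∑ k, α k * x k) :=
    fun i x => pd_comp α hΦ1 i x
  have hpdF : ∀ (i : Fin n) (x : Fin n → ℝ),
      pd i (fun y => F (∑ k, α k * y k)) x = α i * deriv F (∑ k, α k * x k) :=
    fun i x => pd_comp α hF1 i x
  have hpd2Φ : ∀ (i j : Fin n) (x : Fin n → ℝ),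
      pd i (pd j (fun y => Φ (∑ k, α k * y k))) x
        = α i * α j * deriv (deriv Φ) (∑ k, α k * x k) :=
    fun i j x => pd2_comp α hΦ i j x
  have hpd2F : ∀ (i j : Fin n) (x : Fin n → ℝ),
      pd i (pd j (fun y => F (∑ k, α k * y k))) x
        = α i * α j * deriv (deriv F) (∑ k, α k * x k) :=
    fun i j x => pd2_comp α hF i j x
  have hδ0 : δ ≠ 0 := by rcases hδ with h | h <;> norm_num [h]
  have hs1 : ∀ c : ℝ, ∑ k, ε k * (α k * α k * c) = δ * c := by
    intro c
    calc ∑ k, ε k * (α k * α k * c) = (∑ k, ε k * α k ^ 2) * c := by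
          rw [Finset.sum_mul]; exact Finset.sum_congr rfl fun k _ => by ring
      _ = δ * c := by rw [hα]
  have hs2 : ∀ c : ℝ, ∑ k, ε k * (α k * c) ^ 2 = δ * c ^ 2 := by
    intro c
    calc ∑ k, ε k * (α k * c) ^ 2 = (∑ k, ε k * α k ^ 2) * c ^ 2 := by
          rw [Finset.sum_mul]; exact Finset.sum_congr rfl fun k _ => by ring
      _ = δ * c ^ 2 := by rw [hα]
  have hs3 : ∀ c d : ℝ, ∑ k, ε k * (α k * c) * (α k * d) = δ * (c * d) := by
    intro c d
    calc ∑ k, ε k * (α k * c) * (α k * d) = (∑ k, ε k * α k ^ 2) * (c * d) := by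
          rw [Finset.sum_mul]; exact Finset.sum_congr rfl fun k _ => by ring
      _ = δ * (c * d) := by rw [hα]
  have hε2 : ∀ i, ε i ^ 2 = 1 := by
    intro i; rcases hε i with h | h <;> rw [h] <;> norm_num
  unfold EinsteinPDE
  constructor
  · rintro ⟨h1, h2, h3⟩ ξ
    obtain ⟨i0, hi0⟩ : ∃ i, α i ≠ 0 := by
      by_contra hall
      push_neg at hall
      rw [Finset.sum_eq_zero (fun k _ => by rw [hall k]; ring)] at hα
      exact hδ0 hα.symm
    set x : Fin n → ℝ := Pi.single i0 (ξ / α i0) with hxdef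
    have hξ : ∑ k, α k * x k = ξ := by
      simp only [hxdef, Pi.single_apply, mul_ite, mul_zero, Finset.sum_ite_eq']
      rw [if_pos (Finset.mem_univ i0)]
      field_simp
    set O1 : ℝ := ((n : ℝ) - 2) * F ξ * deriv (deriv Φ) ξ - (m : ℝ) * Φ ξ * deriv (deriv F) ξ
        - 2 * (m : ℝ) * deriv Φ ξ * deriv F ξ with hO1def
    set B : ℝ := δ * (F ξ * Φ ξ * deriv (deriv Φ) ξ - ((n : ℝ) - 1) * F ξ * (deriv Φ ξ) ^ 2
        + (m : ℝ) * Φ ξ * deriv Φ ξ * deriv F ξ) - lam * F ξ with hBdef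
    have hAB : ∀ i, (α i) ^ 2 * (Φ ξ * O1) + ε i * B = 0 := by
      intro i
      have e := h2 x i
      simp only [hpd2Φ, hpd2F, hpdΦ, hpdF, hs1, hs2, hs3, hξ] at e
      rw [hO1def, hBdef]
      linear_combination e
    have hAB' : ∀ i, ε i * (α i) ^ 2 * (Φ ξ * O1) + B = 0 := by
      intro i
      linear_combination ε i * hAB i - B * hε2 i
    have hX : Φ ξ * O1 = 0 := by
      by_contra hXne
      set i1 : Fin n := ⟨0, by omega⟩ with hi1def
      set i2 : Fin n := ⟨1, by omega⟩ with hi2def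
      have hsame : ∀ i, ε i * α i ^ 2 = ε i1 * α i1 ^ 2 := by
        intro i
        have hd : (ε i * α i ^ 2 - ε i1 * α i1 ^ 2) * (Φ ξ * O1) = 0 := by
          linear_combination hAB' i - hAB' i1
        have := (mul_eq_zero.mp hd).resolve_right hXne
        linarith
      have hsum : δ = (n : ℝ) * (ε i1 * α i1 ^ 2) := by
        rw [← hα, Finset.sum_congr rfl (fun i _ => hsame i), Finset.sum_const,
          Finset.card_univ, Fintype.card_fin, nsmul_eq_mul]
      have hc : ε i1 * α i1 ^ 2 ≠ 0 := by
        intro h0; rw [h0, mul_zero] at hsum; exact hδ0 hsum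
      have hαall : ∀ i, α i ≠ 0 := by
        intro i h0
        have hs := hsame i
        rw [h0] at hs
        apply hc
        rw [← hs]
        ring
      have hne : i1 ≠ i2 := by simp [hi1def, hi2def, Fin.ext_iff]
      have e1 := h1 x i1 i2 hne
      simp only [hpd2Φ, hpd2F, hpdΦ, hpdF, hξ] at e1
      have he : (α i1 * α i2) * O1 = 0 := by
        rw [hO1def]; linear_combination e1
      have hO1 : O1 = 0 :=
        (mul_eq_zero.mp he).resolve_left (mul_ne_zero (hαall i1) (hαall i2))
      exact hXne (by rw [hO1, mul_zero])
    have hO1 : O1 = 0 := (mul_eq_zero.mp hX).resolve_left (hΦne ξ)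
    have hB : B = 0 := by
      have := hAB' i0
      rw [hX] at this
      linarith [this]
    refine ⟨by rw [← hO1, hO1def], by rw [hBdef] at hB; linarith, ?_⟩
    have e3 := h3 x
    simp only [hpd2Φ, hpd2F, hpdΦ, hpdF, hs1, hs2, hs3, hξ] at e3
    linear_combination e3
  · intro h
    refine ⟨?_, ?_, ?_⟩
    · intro x i j hij
      obtain ⟨o1, o2, o3⟩ := h (∑ k, α k * x k)
      simp only [hpd2Φ, hpd2F, hpdΦ, hpdF]
      linear_combination (α i * α j) * o1
    · intro x i
      obtain ⟨o1, o2, o3⟩ := h (∑ k, α k * x k)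
      simp only [hpd2Φ, hpd2F, hpdΦ, hpdF, hs1, hs2, hs3]
      linear_combination (Φ (∑ k, α k * x k) * (α i) ^ 2) * o1 + ε i * o2
    · intro x
      obtain ⟨o1, o2, o3⟩ := h (∑ k, α k * x k)
      simp only [hpd2Φ, hpd2F, hpdΦ, hpdF, hs1, hs2, hs3]
      linear_combination o3
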